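/- For a quaternion w ∈ ℍ: the set of quaternions anticommuting with w (i.e., qw = −wq) equals {0} if Re(w) ≠ 0 and w ≠ 0; and if Re(w) = 0 with w ≠ 0, it equals the orthogonal complement ⟨1, w⟩^⊥. -/

import Mathlib

open Quaternion RealInnerProductSpace

private lemma anti_iff (w q : ℍ[ℝ]) :
    q * w = -(w * q) ↔
      (q.re * w.re - (q.imI * w.imI + q.imJ * w.imJ + q.imK * w.imK) = 0 ∧
       q.re * w.imI + w.re * q.imI = 0 ∧
       q.re * w.imJ + w.re * q.imJ = 0 ∧
       q.re * w.imK + w.re * q.imK = 0) := by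
  rw [Quaternion.ext_iff]
  simp only [Quaternion.re_mul, Quaternion.imI_mul, Quaternion.imJ_mul, Quaternion.imK_mul,
    Quaternion.re_neg, Quaternion.imI_neg, Quaternion.imJ_neg, Quaternion.imK_neg]
  constructor <;> rintro ⟨h1, h2, h3, h4⟩ <;>
    refine ⟨by linarith, by linarith, by linarith, by linarith⟩

private lemma mem_orth_iff (w q : ℍ[ℝ]) :
    q ∈ (Submodule.span ℝ ({1, w} : Set ℍ[ℝ]))ᗮ ↔ ⟪(1 : ℍ[ℝ]), q⟫ = 0 ∧ ⟪w, q⟫ = 0 := by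
  rw [Submodule.mem_orthogonal]
  constructor
  · intro h
    exact ⟨h 1 (Submodule.subset_span (by simp)), h w (Submodule.subset_span (by simp))⟩
  · rintro ⟨h1, hw⟩ u hu
    induction hu using Submodule.span_induction with
    | mem x hx => rcases hx with rfl | rfl; exacts [h1, hw]
    | zero => simp
    | add x y _ _ hx hy => rw [inner_add_left, hx, hy, add_zero]
    | smul r x _ hx => rw [real_inner_smul_left, hx, mul_zero]

/-- For a nonzero quaternion `w`: if `Re(w) ≠ 0`, only `0` anticommutes with `w`;
if `Re(w) = 0`, the quaternions anticommuting with `w` are exactly the orthogonal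
complement of the span of `1` and `w`. -/
theorem stmt_15 (w : ℍ[ℝ]) (hw : w ≠ 0) :
    (w.re ≠ 0 → ∀ q : ℍ[ℝ], q * w = -(w * q) → q = 0) ∧
    (w.re = 0 → ∀ q : ℍ[ℝ],
      q * w = -(w * q) ↔ q ∈ (Submodule.span ℝ ({1, w} : Set ℍ[ℝ]))ᗮ) := by
  constructor
  · intro hre q hq
    rw [anti_iff] at hq
    obtain ⟨h1, h2, h3, h4⟩ := hq
    have key : q.re * (w.re ^ 2 + w.imI ^ 2 + w.imJ ^ 2 + w.imK ^ 2) = 0 := by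
      linear_combination w.re * h1 + w.imI * h2 + w.imJ * h3 + w.imK * h4
    have hpos : w.re ^ 2 + w.imI ^ 2 + w.imJ ^ 2 + w.imK ^ 2 > 0 := by positivity
    have hre0 : q.re = 0 := by
      rcases mul_eq_zero.mp key with h | h
      · exact h
      · exact absurd h (ne_of_gt hpos)
    rw [hre0] at h2 h3 h4
    simp [hre] at h2 h3 h4
    ext <;> assumption
  · intro hre q
    rw [anti_iff, mem_orth_iff]
    have hinner1 : ⟪(1 : ℍ[ℝ]), q⟫ = q.re := by
      simp [Quaternion.inner_def, Quaternion.re_mul]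
    have hinnerw : ⟪w, q⟫ = w.re * q.re + w.imI * q.imI + w.imJ * q.imJ + w.imK * q.imK := by
      simp only [Quaternion.inner_def, Quaternion.re_mul, Quaternion.re_star,
        Quaternion.imI_star, Quaternion.imJ_star, Quaternion.imK_star]
      ring
    rw [hinner1, hinnerw, hre]
    have him : w.imI ≠ 0 ∨ w.imJ ≠ 0 ∨ w.imK ≠ 0 := by
      by_contra h
      push_neg at h
      obtain ⟨hi, hj, hk⟩ := h
      exact hw (by ext <;> simp [hre, hi, hj, hk])
    constructor
    · rintro ⟨h1, h2, h3, h4⟩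
      have hre0 : q.re = 0 := by
        rcases him with h | h | h
        · rcases mul_eq_zero.mp (by linarith : q.re * w.imI = 0) with h' | h'
          exacts [h', absurd h' h]
        · rcases mul_eq_zero.mp (by linarith : q.re * w.imJ = 0) with h' | h'
          exacts [h', absurd h' h]
        · rcases mul_eq_zero.mp (by linarith : q.re * w.imK = 0) with h' | h'
          exacts [h', absurd h' h]
      exact ⟨hre0, by linear_combination -h1⟩
    · rintro ⟨h1, h2⟩
      exact ⟨by linear_combination -h2, by simp [h1], by simp [h1], by simp [h1]⟩
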